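/- arXiv:0806.4510 — 2 statements merged into one kernel-verified Lean document; each statement's English description precedes it below -/
import Mathlib

section
/- Let F be a finite field with q elements, let P be a polynomial in F[X_1, …, X_μ], and fix a monomial ordering ≺. Let R be a reduced representative of P (the degree of R in each variable is at most q−1 and P−R lies in the ideal generated by X_1^q−X_1, …, X_μ^q−X_μ), assume R ≠ 0, and let X_1^{j_1}⋯X_μ^{j_μ} be the leading monomial of R with respect to ≺. Then the number of points (x_1, …, x_μ) in F^μ with P(x_1, …, x_μ) ≠ 0 is at least (q−j_1)(q−j_2)⋯(q−j_μ). (Equivalently, if the coordinates are chosen independently and uniformly at random from F, the probability that P evaluates to a nonzero value is at least ∏_{v=1}^{μ}(q−j_v)/q^μ.) -/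
/-- The leading monomial (exponent vector) of a polynomial `f` with respect to a monomial
order `m`: the `m`-largest element of the support of `f` (and `0` for the zero polynomial). -/
noncomputable def leadingExp {σ K : Type*} [CommSemiring K] (m : MonomialOrder σ)
    (f : MvPolynomial σ K) : σ →₀ ℕ :=
  m.toSyn.symm (f.support.sup fun d => m.toSyn d)

/-!
Since `x ^ q = x` on `F`, the polynomials `P` and `R` define the same function, so it suffices
to count the points of the set `S` where `R` does not vanish. Let `j` be the leading exponent of
`R`. For a nonzero `G` supported on the box `d i < q - j i`, the product `G * R` has leading
exponent `deg G + j`, all of whose entries are `< q`. Dividing `G * R` by the `X i ^ q - X i`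
leaves a remainder of degree `< q` in each variable, with the same values and, since the
leading exponent is not divisible by any `X i ^ q`, the same leading coefficient; such a
nonzero polynomial does not vanish on all of `F^μ`. Hence `G ↦ (G * R)|_S` is injective on the
span of the box monomials, and comparing dimensions gives `∏ (q - j i) ≤ |S|`.
-/

open MvPolynomial

universe u v

namespace MvPolynomial

theorem eq_zero_of_forall_eval_eq_zero {σ : Type u} {K : Type v} [Field K] [Fintype K] [Finite σ]
    {p : MvPolynomial σ K} (hp : p ∈ restrictDegree σ K (Fintype.card K - 1))
    (h : ∀ x : σ → K, eval x p = 0) : p = 0 := by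
  -- `eq_zero_of_eval_eq_zero` wants `σ` and `K` in one universe
  let e : σ ≃ ULift.{v} (Fin (Nat.card σ)) := (Finite.equivFin σ).trans Equiv.ulift.symm
  suffices rename e p = 0 from rename_injective e e.injective (by rwa [map_zero])
  refine eq_zero_of_eval_eq_zero _ _ _ (fun x => by rw [eval_rename]; exact h _) ?_
  rw [mem_restrictDegree] at hp ⊢
  intro s hs i
  rw [support_rename_of_injective e.injective, Finset.mem_image] at hs
  obtain ⟨s, hs, rfl⟩ := hs
  rw [Finsupp.mapDomain_equiv_apply]
  exact hp s hs _

theorem eval_eq_of_sub_mem_span_X_pow_card_sub_X {σ K : Type*} [Field K] [Fintype K]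
    {P R : MvPolynomial σ K}
    (hPR : P - R ∈
      Ideal.span (Set.range fun i : σ => (X i : MvPolynomial σ K) ^ Fintype.card K - X i))
    (x : σ → K) : eval x P = eval x R := by
  suffices P - R ∈ RingHom.ker (eval x) by rwa [RingHom.mem_ker, map_sub, sub_eq_zero] at this
  refine Ideal.span_le.mpr ?_ hPR
  rintro _ ⟨i, rfl⟩
  simp [FiniteField.pow_card]

end MvPolynomial

namespace MonomialOrder

variable {σ : Type*} (m : MonomialOrder σ)

section XPow

variable {R : Type*} [CommSemiring R] [Nontrivial R] (i : σ) {n : ℕ}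

theorem degree_X_pow : m.degree (X i ^ n : MvPolynomial σ R) = Finsupp.single i n := by
  classical
  rw [X_pow_eq_monomial, degree_monomial, if_neg one_ne_zero]

theorem degree_X_lt_degree_X_pow (hn : 1 < n) :
    m.degree (X i : MvPolynomial σ R) ≺[m] m.degree (X i ^ n : MvPolynomial σ R) := by
  rw [degree_X, degree_X_pow]
  exact m.toSyn_strictMono <|
    Finsupp.single_mono.strictMono_of_injective (Finsupp.single_injective i) hn

end XPow

section XPowSubX

variable {R : Type*} [CommRing R] [Nontrivial R] (i : σ) {n : ℕ}

theorem degree_X_pow_sub_X (hn : 1 < n) :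
    m.degree (X i ^ n - X i : MvPolynomial σ R) = Finsupp.single i n :=
  (m.degree_sub_of_lt (m.degree_X_lt_degree_X_pow i hn)).trans (m.degree_X_pow i)

theorem leadingCoeff_X_pow_sub_X (hn : 1 < n) :
    m.leadingCoeff (X i ^ n - X i : MvPolynomial σ R) = 1 := by
  classical
  rw [m.leadingCoeff_sub_of_lt (m.degree_X_lt_degree_X_pow i hn), leadingCoeff, degree_X_pow,
    X_pow_eq_monomial, coeff_monomial, if_pos rfl]

end XPowSubX

variable {K : Type*} [Field K] [Fintype K]

theorem exists_restrictDegree_eval_eq_of_degree_lt_card (f : MvPolynomial σ K)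
    (hf : ∀ i, m.degree f i < Fintype.card K) :
    ∃ r ∈ restrictDegree σ K (Fintype.card K - 1),
      (∀ x, eval x r = eval x f) ∧ r.coeff (m.degree f) = m.leadingCoeff f := by
  have hq : 1 < Fintype.card K := Fintype.one_lt_card
  obtain ⟨g, r, hfr, hg, hr⟩ :=
    m.div (fun i => by rw [m.leadingCoeff_X_pow_sub_X i hq]; exact isUnit_one) f
  refine ⟨r, ?_, fun x => ?_, ?_⟩
  · rw [mem_restrictDegree]
    intro c hc i
    have := hr c hc i
    rw [m.degree_X_pow_sub_X i hq, Finsupp.single_le_iff] at this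
    omega
  · simp [hfr, Finsupp.linearCombination_apply, Finsupp.sum, FiniteField.pow_card]
  · set d := m.degree f
    have hcoeff (i : σ) : ((X i ^ Fintype.card K - X i) * g i).coeff d = 0 := by
      rcases eq_or_ne (g i) 0 with hgi | hgi
      · rw [hgi, mul_zero, coeff_zero]
      -- the `i`-th entry of the degree of `(X i ^ q - X i) * g i` is at least `q > d i`
      apply m.coeff_eq_zero_of_lt (lt_of_le_of_ne (hg i) fun h => ?_)
      have h := congrArg (· i) (m.toSyn.injective h)
      have hb : (X i ^ Fintype.card K - X i : MvPolynomial σ K) ≠ 0 := fun h0 => by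
        simpa [h0] using m.leadingCoeff_X_pow_sub_X (R := K) i hq
      rw [m.degree_mul hb hgi, m.degree_X_pow_sub_X i hq] at h
      simp only [Finsupp.add_apply, Finsupp.single_eq_same] at h
      have := hf i
      omega
    change _ = coeff d f
    rw [hfr, coeff_add, Finsupp.linearCombination_apply, Finsupp.sum, coeff_sum]
    simp only [smul_eq_mul, mul_comm (g _), hcoeff, Finset.sum_const_zero, zero_add]

theorem exists_eval_ne_zero_of_degree_lt_card [Finite σ] {f : MvPolynomial σ K} (hf0 : f ≠ 0)
    (hf : ∀ i, m.degree f i < Fintype.card K) : ∃ x, eval x f ≠ 0 := by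
  obtain ⟨r, hr, hrf, hcoeff⟩ := m.exists_restrictDegree_eval_eq_of_degree_lt_card f hf
  by_contra! h
  rw [eq_zero_of_forall_eval_eq_zero hr fun x => (hrf x).trans (h x), coeff_zero, eq_comm,
    m.leadingCoeff_eq_zero_iff] at hcoeff
  exact hf0 hcoeff

theorem prod_card_sub_degree_le_ncard [Fintype σ] {R : MvPolynomial σ K} (hR : R ≠ 0) :
    ∏ i, (Fintype.card K - m.degree R i) ≤ {x : σ → K | eval x R ≠ 0}.ncard := by
  classical
  set q := Fintype.card K
  set j := m.degree R
  set S := {x : σ → K | eval x R ≠ 0}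
  let exps : ((i : σ) → Fin (q - j i)) → σ →₀ ℕ :=
    fun e => Finsupp.equivFunOnFinite.symm fun i => e i
  have exps_inj : exps.Injective := fun e e' h => by
    ext i; simpa [exps] using congrArg (· i) h
  let evalMul : MvPolynomial σ K →ₗ[K] (S → K) :=
    { toFun := fun G x => eval x.1 (G * R)
      map_add' := by intros; ext; simp [add_mul]
      map_smul' := by intros; ext; simp }
  have hdisj : Disjoint (Submodule.span K (Set.range fun e => monomial (exps e) (1 : K)))
      (LinearMap.ker evalMul) := by
    rw [Submodule.disjoint_def]
    intro G hG hker
    by_contra hG0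
    rw [Set.range_comp' (monomial · (1 : K)) exps, ← restrictSupport_eq_span,
      mem_restrictSupport_iff] at hG
    obtain ⟨e, he⟩ := hG ((m.degree_mem_support_iff G).mpr hG0)
    obtain ⟨x, hx⟩ := m.exists_eval_ne_zero_of_degree_lt_card (mul_ne_zero hG0 hR) fun i => by
      rw [m.degree_mul hG0 hR, Finsupp.add_apply, ← he]
      exact Nat.add_lt_of_lt_sub (e i).isLt
    have hxS : x ∈ S := fun h => hx (by simp [h])
    exact hx (congrFun hker ⟨x, hxS⟩)
  have hli := ((basisMonomials σ K).linearIndependent.comp exps exps_inj).map hdisj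
  calc ∏ i, (q - j i) = Fintype.card ((i : σ) → Fin (q - j i)) := by simp
    _ ≤ Module.finrank K (S → K) := hli.fintype_card_le_finrank
    _ = S.ncard := by
      rw [Module.finrank_fintype_fun_eq_card, ← Nat.card_eq_fintype_card, Nat.card_coe_set_eq]

end MonomialOrder

theorem card_nonzeros_ge_of_leading_monomial_general {F : Type*} [Field F] [Fintype F] (q μ : ℕ)
    (hq : Fintype.card F = q) (m : MonomialOrder (Fin μ)) (P R : MvPolynomial (Fin μ) F)
    (hmem : P - R ∈ Ideal.span
      (Set.range fun i : Fin μ => (MvPolynomial.X i : MvPolynomial (Fin μ) F) ^ q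
        - MvPolynomial.X i))
    (hR : R ≠ 0) :
    (∏ v : Fin μ, (q - leadingExp m R v)) ≤
      {x : Fin μ → F | MvPolynomial.eval x P ≠ 0}.ncard := by
  subst hq
  have hPR : {x : Fin μ → F | eval x P ≠ 0} = {x | eval x R ≠ 0} := by
    ext x
    simp only [Set.mem_ofPred_eq, eval_eq_of_sub_mem_span_X_pow_card_sub_X hmem x]
  rw [hPR]
  exact m.prod_card_sub_degree_le_ncard hR

/-- Let `F` be a finite field with `q` elements, `P ∈ F[X_1, …, X_μ]`, and let `R` be a
reduced representative of `P` modulo `(X_1^q - X_1, …, X_μ^q - X_μ)` with `R ≠ 0`.  If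
`X_1^{j_1} ⋯ X_μ^{j_μ}` is the leading monomial of `R` with respect to a monomial order,
then `P` is nonzero at no fewer than `(q - j_1) ⋯ (q - j_μ)` points of `F^μ`; equivalently,
a uniformly random point is a nonzero point of `P` with probability at least
`∏ (q - j_v) / q^μ`. -/
theorem card_nonzeros_ge_of_leading_monomial {F : Type*} [Field F] [Fintype F] (q μ : ℕ)
    (hq : Fintype.card F = q) (m : MonomialOrder (Fin μ)) (P R : MvPolynomial (Fin μ) F)
    (hdeg : ∀ i : Fin μ, R.degreeOf i ≤ q - 1)
    (hmem : P - R ∈ Ideal.span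
      (Set.range fun i : Fin μ => (MvPolynomial.X i : MvPolynomial (Fin μ) F) ^ q
        - MvPolynomial.X i))
    (hR : R ≠ 0) :
    (∏ v : Fin μ, (q - leadingExp m R v)) ≤
      {x : Fin μ → F | MvPolynomial.eval x P ≠ 0}.ncard :=
  card_nonzeros_ge_of_leading_monomial_general q μ hq m P R hmem hR
end

section
/- Let F be a finite field with q elements, let P be a polynomial in F[X_1, …, X_μ], and fix a monomial ordering ≺. Let I be the ideal of F[X_1, …, X_μ] generated by P together with X_1^q−X_1, …, X_μ^q−X_μ, and let Δ_≺(I) be its footprint, i.e., the set of monomials that do not occur as the leading monomial of any nonzero polynomial in I. Then the number of points (x_1, …, x_μ) in F^μ with P(x_1, …, x_μ) = 0 equals |Δ_≺(I)|; equivalently, the number of points with P(x_1, …, x_μ) ≠ 0 equals q^μ − |Δ_≺(I)|. -/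
/-- The footprint `Δ_≺(I)` of an ideal `I` with respect to a monomial order: the set of
monomials (exponent vectors) that are not the leading monomial of any nonzero element of `I`. -/
def footprint {σ K : Type*} [CommSemiring K] (m : MonomialOrder σ)
    (I : Ideal (MvPolynomial σ K)) : Set (σ →₀ ℕ) :=
  {d | ∀ g ∈ I, g ≠ 0 → leadingExp m g ≠ d}

/-!
The footprint monomials of any ideal `J ⊆ K[X]` form a `K`-basis of `K[X] ⧸ J`: dividing by
all nonzero elements of `J` reduces every polynomial modulo `J` to one supported on the
footprint, and a nonzero element of `J` cannot be supported there, since its leading monomial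
is not in the footprint. For the ideal `I = ⟨P, X_i ^ q - X_i⟩`, evaluation at the zero set `V`
of `P` identifies `F[X] ⧸ I` with `F ^ V`: by the combinatorial Nullstellensatz every polynomial
vanishing on all of `F ^ μ` lies in `⟨X_i ^ q - X_i⟩`, and since `P ^ (q - 1)` is the indicator
function of the complement of `V`, a polynomial `f` vanishing on `V` is `f * P ^ (q - 1)` plus
such a polynomial. Comparing dimensions gives `|V| = |Δ_≺(I)|`.
-/

open MvPolynomial

section Footprint

variable {σ K : Type*}

theorem leadingExp_eq_degree [CommSemiring K] (m : MonomialOrder σ) (f : MvPolynomial σ K) :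
    leadingExp m f = m.degree f :=
  rfl

theorem eq_zero_of_mem_of_support_subset_footprint [CommSemiring K] (m : MonomialOrder σ)
    {J : Ideal (MvPolynomial σ K)} {r : MvPolynomial σ K} (hrJ : r ∈ J)
    (hr : ↑r.support ⊆ footprint m J) : r = 0 := by
  by_contra hr0
  exact hr (m.degree_mem_support hr0) r hrJ hr0 (leadingExp_eq_degree m r)

theorem exists_sub_mem_support_subset_footprint [Field K] (m : MonomialOrder σ)
    (J : Ideal (MvPolynomial σ K)) (f : MvPolynomial σ K) :
    ∃ r : MvPolynomial σ K, f - r ∈ J ∧ ↑r.support ⊆ footprint m J := by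
  obtain ⟨g, r, hf, -, hr⟩ :=
    m.div_set (B := {g | g ∈ J ∧ g ≠ 0}) (fun _ hb => m.isUnit_leadingCoeff.mpr hb.2) f
  refine ⟨r, ?_, fun c hc g hgJ hg0 hgc => hr c hc g ⟨hgJ, hg0⟩ ?_⟩
  · rw [sub_eq_of_eq_add hf, Finsupp.linearCombination_apply]
    exact Ideal.sum_mem _ fun b _ => J.mul_mem_left _ b.2.1
  · rw [← leadingExp_eq_degree, hgc]

variable [Field K] (m : MonomialOrder σ) (J : Ideal (MvPolynomial σ K))

theorem bijective_mkₐ_comp_restrictSupport_footprint :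
    Function.Bijective
      ((Ideal.Quotient.mkₐ K J).toLinearMap ∘ₗ (restrictSupport K (footprint m J)).subtype) := by
  constructor
  · rw [← LinearMap.ker_eq_bot, LinearMap.ker_eq_bot']
    intro r hr
    have hrJ : (r : MvPolynomial σ K) ∈ J := Ideal.Quotient.eq_zero_iff_mem.mp hr
    exact Subtype.ext (eq_zero_of_mem_of_support_subset_footprint m hrJ r.2)
  · intro f
    obtain ⟨f, rfl⟩ := Ideal.Quotient.mk_surjective f
    obtain ⟨r, hfr, hr⟩ := exists_sub_mem_support_subset_footprint m J f
    exact ⟨⟨r, hr⟩, (Ideal.Quotient.eq.mpr hfr).symm⟩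

noncomputable def footprintBasis : Module.Basis (footprint m J) K (MvPolynomial σ K ⧸ J) :=
  (basisRestrictSupport K (footprint m J)).map
    (LinearEquiv.ofBijective _ (bijective_mkₐ_comp_restrictSupport_footprint m J))

theorem finrank_quotient_eq_ncard_footprint :
    Module.finrank K (MvPolynomial σ K ⧸ J) = (footprint m J).ncard :=
  Module.finrank_eq_nat_card_basis (footprintBasis m J)

end Footprint

theorem Polynomial.prod_univ_X_sub_C_eq_X_pow_card_sub_X (K : Type*) [Field K] [Fintype K] :
    ∏ r : K, (Polynomial.X - Polynomial.C r) = Polynomial.X ^ Fintype.card K - Polynomial.X := by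
  have hmonic : (Polynomial.X ^ Fintype.card K - Polynomial.X : Polynomial K).Monic :=
    Polynomial.monic_X_pow_sub (by simpa using Fintype.one_lt_card (α := K))
  have hcard := FiniteField.X_pow_card_sub_X_natDegree_eq K (Fintype.one_lt_card (α := K))
  have := Polynomial.prod_multiset_X_sub_C_of_monic_of_roots_card_eq hmonic
    (by rw [FiniteField.roots_X_pow_card_sub_X, hcard]; rfl)
  rwa [FiniteField.roots_X_pow_card_sub_X] at this

namespace MvPolynomial

variable {σ K : Type*} [Field K] [Fintype K]

theorem prod_univ_X_sub_C_eq_X_pow_card_sub_X (i : σ) :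
    ∏ r : K, (X i - C r : MvPolynomial σ K) = X i ^ Fintype.card K - X i := by
  simpa only [map_prod, map_sub, map_pow, Polynomial.aeval_X, Polynomial.aeval_C,
    MvPolynomial.algebraMap_eq] using congrArg (Polynomial.aeval (X i : MvPolynomial σ K))
      (Polynomial.prod_univ_X_sub_C_eq_X_pow_card_sub_X K)

theorem mem_span_X_pow_card_sub_X_of_eval_eq_zero [Finite σ] {f : MvPolynomial σ K}
    (hf : ∀ x, eval x f = 0) :
    f ∈ Ideal.span (Set.range fun i : σ => (X i : MvPolynomial σ K) ^ Fintype.card K - X i) := by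
  obtain ⟨h, -, rfl⟩ := combinatorial_nullstellensatz_exists_linearCombination
    (fun _ => Finset.univ) (fun _ => Finset.univ_nonempty) f (fun x _ => hf x)
  simp_rw [prod_univ_X_sub_C_eq_X_pow_card_sub_X]
  rw [Finsupp.linearCombination_apply]
  exact Ideal.sum_mem _ fun i _ => Ideal.mul_mem_left _ _ (Ideal.subset_span ⟨i, rfl⟩)

theorem mem_span_union_X_pow_card_sub_X_of_eval_eq_zero [Finite σ] {P f : MvPolynomial σ K}
    (hf : ∀ x, eval x P = 0 → eval x f = 0) :
    f ∈ Ideal.span ({P} ∪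
      Set.range fun i : σ => (X i : MvPolynomial σ K) ^ Fintype.card K - X i) := by
  set q := Fintype.card K
  have hq : 0 < q - 1 := Nat.sub_pos_of_lt Fintype.one_lt_card
  have hvan : ∀ x, eval x (f * (1 - P ^ (q - 1))) = 0 := by
    intro x
    by_cases hx : eval x P = 0
    · simp [hf x hx]
    · simp [show eval x P ^ (q - 1) = 1 from FiniteField.pow_card_sub_one_eq_one _ hx]
  have hP : P ∈ Ideal.span ({P} ∪ Set.range fun i : σ => (X i : MvPolynomial σ K) ^ q - X i) :=
    Ideal.subset_span (Or.inl rfl)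
  rw [show f = f * P ^ (q - 1) + f * (1 - P ^ (q - 1)) by ring]
  exact add_mem (Ideal.mul_mem_left _ _ (Ideal.pow_mem_of_mem _ hP _ hq))
    (Ideal.span_mono Set.subset_union_right (mem_span_X_pow_card_sub_X_of_eval_eq_zero hvan))

variable (K) in
noncomputable def evalOn (V : Set (σ → K)) : MvPolynomial σ K →ₐ[K] (V → K) :=
  AlgHom.pi fun x => aeval x.1

theorem evalOn_surjective [Finite σ] (V : Set (σ → K)) : Function.Surjective (evalOn K V) := by
  intro ψ
  obtain ⟨g, rfl⟩ := Subtype.val_injective.surjective_comp_right ψ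
  obtain ⟨f, -, hf⟩ := Submodule.mem_map.mp
    ((map_restrict_dom_evalₗ K σ).symm ▸ Submodule.mem_top : g ∈ _)
  exact ⟨f, by ext x; exact congrFun hf x⟩

theorem ker_evalOn_setOf_eval_eq_zero [Finite σ] (P : MvPolynomial σ K) :
    RingHom.ker (evalOn K {x | eval x P = 0}) =
      Ideal.span ({P} ∪
        Set.range fun i : σ => (X i : MvPolynomial σ K) ^ Fintype.card K - X i) := by
  apply le_antisymm
  · exact fun f hf =>
      mem_span_union_X_pow_card_sub_X_of_eval_eq_zero fun x hx => congrFun hf ⟨x, hx⟩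
  · rw [Ideal.span_le]
    rintro _ (rfl | ⟨i, rfl⟩) <;> ext x
    · exact x.2
    · simp [evalOn, FiniteField.pow_card]

theorem finrank_quotient_eq_ncard_setOf_eval_eq_zero [Finite σ] (P : MvPolynomial σ K) :
    Module.finrank K (MvPolynomial σ K ⧸
      Ideal.span ({P} ∪ Set.range fun i : σ => (X i : MvPolynomial σ K) ^ Fintype.card K - X i)) =
      {x | eval x P = 0}.ncard := by
  rw [← ker_evalOn_setOf_eval_eq_zero,
    (Ideal.quotientKerAlgEquivOfSurjective (evalOn_surjective _)).toLinearEquiv.finrank_eq]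
  exact Module.finrank_eq_nat_card_basis (Pi.basisFun K _)

end MvPolynomial

/-- Let `F` be a finite field with `q` elements, `P ∈ F[X_1, …, X_μ]`, and let `I` be the
ideal generated by `P` and `X_1^q - X_1, …, X_μ^q - X_μ`.  Then the number of zeros of `P`
in `F^μ` equals the cardinality of the footprint `Δ_≺(I)`; equivalently, the number of
points where `P` is nonzero equals `q^μ - |Δ_≺(I)|`. -/
theorem card_zeros_eq_card_footprint {F : Type*} [Field F] [Fintype F] (q μ : ℕ)
    (hq : Fintype.card F = q) (m : MonomialOrder (Fin μ)) (P : MvPolynomial (Fin μ) F) :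
    {x : Fin μ → F | MvPolynomial.eval x P = 0}.ncard =
      (footprint m (Ideal.span ({P} ∪
        Set.range fun i : Fin μ => (MvPolynomial.X i : MvPolynomial (Fin μ) F) ^ q
          - MvPolynomial.X i))).ncard ∧
    {x : Fin μ → F | MvPolynomial.eval x P ≠ 0}.ncard =
      q ^ μ - (footprint m (Ideal.span ({P} ∪
        Set.range fun i : Fin μ => (MvPolynomial.X i : MvPolynomial (Fin μ) F) ^ q
          - MvPolynomial.X i))).ncard := by
  subst hq
  have hzeros := (finrank_quotient_eq_ncard_setOf_eval_eq_zero P).symm.trans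
    (finrank_quotient_eq_ncard_footprint m _)
  refine ⟨hzeros, ?_⟩
  rw [← hzeros, ← Set.compl_ofPred, Set.ncard_compl, Nat.card_fun, Nat.card_fin,
    Nat.card_eq_fintype_card]
end
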